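/- The set of derivations of the ω-Lie algebra L₁, which equals the ℂ-span of the two 3×3 complex matrices E₁₃ − E₂₃ and E₃₃ (where E_{ij} denotes the matrix with (i,j)-entry 1 and all other entries 0, acting on ℂ³ relative to the basis x,y,z), is a Lie subalgebra of the 3×3 complex matrices under the commutator bracket which is solvable but not nilpotent. -/

import Mathlib

/-!
Skew-symmetry and the three structure constants force
`b u v = (0, u₀v₁ - u₁v₀, u₁v₂ - u₂v₁)`, and the derivation identity on the three basis pairs
kills every entry of `A` except `A₀₂ = -A₁₂` and `A₂₂`. For `e = E₁₃ - E₂₃` and `f = E₃₃` one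
has `⁅e, f⁆ = e`, so the span is the non-abelian two-dimensional Lie algebra: its derived algebra
lies in `ℂ e` and is abelian, hence it is solvable, while `ad (-f)` fixes `e ≠ 0`, so `ad` is not
nilpotent and neither is the algebra.
-/

noncomputable section

/-- The underlying space ℂ³ of the ω-Lie algebra L₁. -/
abbrev V3 : Type := Fin 3 → ℂ

/-- The basis vector x = e₁. -/
def vx : V3 := ![1, 0, 0]

/-- The basis vector y = e₂. -/
def vy : V3 := ![0, 1, 0]

/-- The basis vector z = e₃. -/
def vz : V3 := ![0, 0, 1]

/-- `d : ℂ³ → ℂ³` is a derivation of the bracket `b`. -/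
def IsDer (b : V3 →ₗ[ℂ] V3 →ₗ[ℂ] V3) (d : V3 →ₗ[ℂ] V3) : Prop :=
  ∀ u v : V3, d (b u v) = b (d u) v + b u (d v)

attribute [local instance 100] LieRing.ofAssociativeRing

open Matrix

section LieAlgebra

variable {R L : Type*} [CommRing R] [LieRing L] [LieAlgebra R L]

theorem lie_mem_span_singleton_of_mem_span_pair {e f x y : L} (hef : ⁅e, f⁆ = e)
    (hx : x ∈ Submodule.span R {e, f}) (hy : y ∈ Submodule.span R {e, f}) :
    ⁅x, y⁆ ∈ R ∙ e := by
  obtain ⟨a, c, rfl⟩ := Submodule.mem_span_pair.mp hx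
  obtain ⟨a', c', rfl⟩ := Submodule.mem_span_pair.mp hy
  have hfe : ⁅f, e⁆ = -e := by rw [← lie_skew, hef]
  refine Submodule.mem_span_singleton.mpr ⟨a * c' - c * a', ?_⟩
  simp only [lie_add, add_lie, lie_smul, smul_lie, lie_self, hef, hfe, smul_zero, smul_neg]
  module

variable (R) in
theorem LieAlgebra.isSolvable_of_forall_lie_mem_span_singleton (e : L)
    (h : ∀ x y : L, ⁅x, y⁆ ∈ R ∙ e) : LieAlgebra.IsSolvable L := by
  have hD : ∀ x ∈ LieAlgebra.derivedSeries R L 1, x ∈ R ∙ e := by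
    intro x hx
    replace hx : x ∈ ((LieAlgebra.derivedSeries R L 1 : LieSubalgebra R L) : Submodule R L) := hx
    rw [LieAlgebra.coe_derivedSeries_one_eq] at hx
    refine Submodule.span_le.mpr ?_ hx
    rintro _ ⟨x, y, rfl⟩
    exact h x y
  have hab : IsLieAbelian (LieAlgebra.derivedSeries R L 1) := by
    refine ⟨fun x y => Subtype.ext ?_⟩
    obtain ⟨a, ha⟩ := Submodule.mem_span_singleton.mp (hD x x.2)
    obtain ⟨c, hc⟩ := Submodule.mem_span_singleton.mp (hD y y.2)
    simp [← ha, ← hc]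
  refine LieAlgebra.IsSolvable.mk (R := R) (k := 1 + 1) ?_
  rw [LieAlgebra.derivedSeries_def, LieAlgebra.derivedSeriesOfIdeal_add,
    ← LieAlgebra.abelian_iff_derived_one_eq_bot]
  exact hab

end LieAlgebra

theorem LieRing.not_isNilpotent_of_lie_eq_self {L : Type*} [LieRing L] {e f : L} (he : e ≠ 0)
    (hfe : ⁅f, e⁆ = e) : ¬ LieRing.IsNilpotent L := by
  intro hL
  obtain ⟨k, hk⟩ := LieAlgebra.nilpotent_ad_of_nilpotent_algebra ℤ L
  have hfix : ∀ n : ℕ, (LieAlgebra.ad ℤ L f ^ n) e = e := by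
    intro n
    induction n with
    | zero => rfl
    | succ n ih => rw [pow_succ, Module.End.mul_apply, LieAlgebra.ad_apply, hfe, ih]
  exact he (by simpa [hk f] using (hfix k).symm)

namespace L1

def bracket (u v : V3) : V3 := ![0, u 0 * v 1 - u 1 * v 0, u 1 * v 2 - u 2 * v 1]

theorem eq_bracket_of_skew {b : V3 →ₗ[ℂ] V3 →ₗ[ℂ] V3} (hskew : ∀ u v : V3, b u v = - b v u)
    (hxy : b vx vy = vy) (hxz : b vx vz = 0) (hyz : b vy vz = vz) (u v : V3) :
    b u v = bracket u v := by
  have hself : ∀ w : V3, b w w = 0 := fun w => self_eq_neg.mp (hskew w w)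
  have hyx : b vy vx = -vy := by rw [hskew, hxy]
  have hzx : b vz vx = 0 := by rw [hskew, hxz, neg_zero]
  have hzy : b vz vy = -vz := by rw [hskew, hyz]
  have hbasis : ∀ w : V3, w = w 0 • vx + w 1 • vy + w 2 • vz := by
    intro w; funext i; fin_cases i <;> simp [vx, vy, vz]
  rw [hbasis u, hbasis v]
  simp only [map_add, map_smul, LinearMap.add_apply, LinearMap.smul_apply,
    hxy, hxz, hyz, hyx, hzx, hzy, hself]
  funext i
  fin_cases i <;> simp [bracket, vx, vy, vz] <;> ring

theorem transpose_mulVec_apply (A : Matrix (Fin 3) (Fin 3) ℂ) (v : V3) (i : Fin 3) :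
    (Aᵀ *ᵥ v) i = v 0 * A 0 i + v 1 * A 1 i + v 2 * A 2 i := by
  simp [mulVec_transpose, vecMul, dotProduct, Fin.sum_univ_three]

def derNil : Matrix (Fin 3) (Fin 3) ℂ := single 0 2 1 - single 1 2 1

def derDiag : Matrix (Fin 3) (Fin 3) ℂ := single 2 2 1

theorem lie_derNil_derDiag : ⁅derNil, derDiag⁆ = derNil := by
  ext i j
  fin_cases i <;> fin_cases j <;>
    simp [derNil, derDiag, Ring.lie_def, mul_apply, single]

theorem derNil_ne_zero : derNil ≠ 0 := fun h => by
  simpa [derNil, single] using congrFun₂ h 0 2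

def derSpan : Submodule ℂ (Matrix (Fin 3) (Fin 3) ℂ) := Submodule.span ℂ {derNil, derDiag}

theorem isDer_iff_mem_derSpan {b : V3 →ₗ[ℂ] V3 →ₗ[ℂ] V3}
    (hb : ∀ u v, b u v = bracket u v) (A : Matrix (Fin 3) (Fin 3) ℂ) :
    IsDer b (toLin' Aᵀ) ↔ A ∈ derSpan := by
  rw [derSpan, Submodule.mem_span_pair]
  constructor
  · intro hA
    have hxy : A 1 0 = 0 ∧ A 0 0 = 0 ∧ A 1 2 = -A 0 2 := by
      simpa [hb, bracket, transpose_mulVec_apply, funext_iff, Fin.forall_fin_succ, vx, vy]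
        using hA vx vy
    have hxz : 0 = A 2 1 ∧ 0 = A 0 1 := by
      simpa [hb, bracket, transpose_mulVec_apply, funext_iff, Fin.forall_fin_succ, vx, vz]
        using hA vx vz
    have hyz : A 2 0 = 0 ∧ A 2 1 = -A 2 0 ∧ A 1 1 = 0 := by
      simpa [hb, bracket, transpose_mulVec_apply, funext_iff, Fin.forall_fin_succ, vy, vz]
        using hA vy vz
    refine ⟨A 0 2, A 2 2, ?_⟩
    ext i j
    fin_cases i <;> fin_cases j <;> simp [derNil, derDiag, single] <;> grind
  · rintro ⟨a, c, rfl⟩ u v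
    funext i
    fin_cases i <;> simp [hb, transpose_mulVec_apply, bracket, derNil, derDiag, single]
    ring

def derAlgebra : LieSubalgebra ℂ (Matrix (Fin 3) (Fin 3) ℂ) :=
  { derSpan with
    lie_mem' := fun hx hy =>
      Submodule.span_mono (Set.singleton_subset_iff.mpr (Set.mem_insert _ _))
        (lie_mem_span_singleton_of_mem_span_pair lie_derNil_derDiag hx hy) }

theorem derNil_mem : derNil ∈ derAlgebra := Submodule.subset_span (Set.mem_insert _ _)

theorem derDiag_mem : derDiag ∈ derAlgebra :=
  Submodule.subset_span (Set.mem_insert_of_mem _ rfl)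

theorem isSolvable_derAlgebra : LieAlgebra.IsSolvable derAlgebra := by
  refine LieAlgebra.isSolvable_of_forall_lie_mem_span_singleton ℂ ⟨derNil, derNil_mem⟩
    fun x y => ?_
  obtain ⟨a, ha⟩ := Submodule.mem_span_singleton.mp
    (lie_mem_span_singleton_of_mem_span_pair lie_derNil_derDiag x.2 y.2)
  exact Submodule.mem_span_singleton.mpr ⟨a, Subtype.ext ha⟩

theorem not_isNilpotent_derAlgebra : ¬ LieRing.IsNilpotent derAlgebra :=
  LieRing.not_isNilpotent_of_lie_eq_self (e := ⟨derNil, derNil_mem⟩)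
    (f := -⟨derDiag, derDiag_mem⟩) (fun h => derNil_ne_zero congr(Subtype.val $h))
    (Subtype.ext (show ⁅-derDiag, derNil⁆ = derNil by
      rw [neg_lie, lie_skew, lie_derNil_derDiag]))

end L1

/-- The set of derivations of the ω-Lie algebra L₁ (a matrix `A` is identified
with the derivation sending a basis vector `eᵢ` to the `i`-th row of `A`, i.e. with
`Matrix.toLin' A.transpose`) equals the ℂ-span of the matrices `E₁₃ - E₂₃` and `E₃₃`, and this span
is a Lie subalgebra of the 3×3 complex matrices (under the commutator bracket) which is
solvable but not nilpotent. -/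
theorem derivation_algebra_L1_solvable_not_nilpotent
    (b : V3 →ₗ[ℂ] V3 →ₗ[ℂ] V3)
    (hskew : ∀ u v : V3, b u v = - b v u)
    (hxy : b vx vy = vy) (hxz : b vx vz = 0) (hyz : b vy vz = vz) :
    ∃ S : LieSubalgebra ℂ (Matrix (Fin 3) (Fin 3) ℂ),
      (S : Set (Matrix (Fin 3) (Fin 3) ℂ)) =
        (Submodule.span ℂ
          {Matrix.single 0 2 (1 : ℂ) - Matrix.single 1 2 (1 : ℂ),
           Matrix.single 2 2 (1 : ℂ)} : Submodule ℂ (Matrix (Fin 3) (Fin 3) ℂ)) ∧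
      {A : Matrix (Fin 3) (Fin 3) ℂ | IsDer b (Matrix.toLin' A.transpose)} =
        (S : Set (Matrix (Fin 3) (Fin 3) ℂ)) ∧
      LieAlgebra.IsSolvable S ∧ ¬ LieRing.IsNilpotent S := by
  refine ⟨L1.derAlgebra, rfl, ?_, L1.isSolvable_derAlgebra, L1.not_isNilpotent_derAlgebra⟩
  ext A
  exact L1.isDer_iff_mem_derSpan (L1.eq_bracket_of_skew hskew hxy hxz hyz) A
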